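/- Let R be a commutative ring and M a finitely generated R-module. A proper submodule N of M is semiprime if and only if N is a radical submodule, i.e., N equals the intersection of all prime submodules of M containing N. -/

import Mathlib

/-- The ideal `(N : m) = {r : R | r • m ∈ N}` attached to a submodule `N` and `m ∈ M`. -/
def pointColon {R M : Type*} [CommRing R] [AddCommGroup M] [Module R M]
    (N : Submodule R M) (m : M) : Ideal R :=
  N.comap (LinearMap.toSpanSingleton R M m)

/-- A submodule `N` of `M` is semiprime if for every `m ∈ M`,
`m ∈ (N : m) • M` implies `m ∈ N`. -/
def IsSemiprimeSub {R M : Type*} [CommRing R] [AddCommGroup M] [Module R M]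
    (N : Submodule R M) : Prop :=
  ∀ m : M, m ∈ pointColon N m • (⊤ : Submodule R M) → m ∈ N

/-- A submodule `P` of `M` is prime if `P ≠ M` and `r • m ∈ P` implies
`m ∈ P` or `r • M ⊆ P`. -/
def IsPrimeSub {R M : Type*} [CommRing R] [AddCommGroup M] [Module R M]
    (P : Submodule R M) : Prop :=
  P ≠ ⊤ ∧ ∀ (r : R) (m : M), r • m ∈ P → m ∈ P ∨ ∀ x : M, r • x ∈ P

/-- The first radical `N^(1)` of `N`: the submodule generated by all `m`
with `m ∈ (N : m) • M`. -/
def firstRadical {R M : Type*} [CommRing R] [AddCommGroup M] [Module R M]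
    (N : Submodule R M) : Submodule R M :=
  Submodule.span R {m : M | m ∈ pointColon N m • (⊤ : Submodule R M)}

section Aux

variable {R M : Type*} [CommRing R] [AddCommGroup M] [Module R M]

lemma mem_pointColon {N : Submodule R M} {m : M} {r : R} :
    r ∈ pointColon N m ↔ r • m ∈ N := Iff.rfl

/-- Prime submodules are semiprime. -/
lemma isPrimeSub_semiprime {P : Submodule R M} (hP : IsPrimeSub P) {m : M}
    (hm : m ∈ pointColon P m • (⊤ : Submodule R M)) : m ∈ P := by
  by_cases hmP : m ∈ P
  · exact hmP
  · refine Submodule.smul_le.mpr (fun r hr x _ => ?_) hm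
    rcases hP.2 r m hr with h | h
    · exact absurd h hmP
    · exact h x

/-- Power fact: if `N` is semiprime, `z ∈ N + I•M` and `Iⁿ • z ⊆ N` then `z ∈ N`. -/
lemma semiprime_pow_smul {N : Submodule R M} (hN : IsSemiprimeSub N) (I : Ideal R) :
    ∀ (n : ℕ) (z : M), z ∈ N ⊔ I • (⊤ : Submodule R M) → (∀ c ∈ I ^ n, c • z ∈ N) → z ∈ N := by
  intro n
  induction n with
  | zero =>
    intro z hz hpow
    have h1 : (1 : R) ∈ I ^ 0 := by
      rw [pow_zero, Ideal.one_eq_top]; exact Submodule.mem_top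
    simpa using hpow 1 h1
  | succ n ih =>
    intro z hz hpow
    have hIz : ∀ s ∈ I, s • z ∈ N := by
      intro s hs
      refine ih (s • z) (Submodule.smul_mem _ s hz) (fun c hc => ?_)
      rw [smul_smul]
      exact hpow (c * s) (by rw [pow_succ]; exact Ideal.mul_mem_mul hc hs)
    obtain ⟨y, hy, v, hv, rfl⟩ := Submodule.mem_sup.mp hz
    have hvN : v ∈ N := by
      apply hN
      have hle : I ≤ pointColon N v := by
        intro s hs
        have h1 : s • (y + v) ∈ N := hIz s hs
        have h2 : s • y ∈ N := Submodule.smul_mem _ s hy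
        have h3 : s • v = s • (y + v) - s • y := by rw [smul_add]; abel
        rw [mem_pointColon, h3]
        exact Submodule.sub_mem _ h1 h2
      exact Submodule.smul_mono_left hle hv
    exact Submodule.add_mem _ hy hvN

/-- Any element of `p • ⊤` already lies in `I • ⊤` for some f.g. `I ≤ p`. -/
lemma exists_fg_smul_top {p : Ideal R} {v : M} (hv : v ∈ p • (⊤ : Submodule R M)) :
    ∃ I : Ideal R, I.FG ∧ I ≤ p ∧ v ∈ I • (⊤ : Submodule R M) := by
  refine Submodule.smul_induction_on hv (fun r hr x _ => ?_) ?_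
  · exact ⟨Ideal.span {r}, ⟨{r}, by simp⟩,
      by rwa [Ideal.span_le, Set.singleton_subset_iff],
      Submodule.smul_mem_smul (Ideal.subset_span rfl) Submodule.mem_top⟩
  · rintro x y ⟨I, hIfg, hIp, hxI⟩ ⟨J, hJfg, hJp, hyJ⟩
    exact ⟨I ⊔ J, Submodule.FG.sup hIfg hJfg, sup_le hIp hJp,
      Submodule.add_mem _ (Submodule.smul_mono_left le_sup_left hxI)
        (Submodule.smul_mono_left le_sup_right hyJ)⟩

/-- For `p` a minimal prime over `q` and `a ∈ p`, some `t * a ^ n ∈ q` with `t ∉ p`. -/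
lemma exists_mul_pow_mem_of_mem_minimalPrimes {R : Type*} [CommRing R] {q p : Ideal R}
    (hp : p ∈ q.minimalPrimes) {a : R} (ha : a ∈ p) :
    ∃ (n : ℕ) (t : R), t ∉ p ∧ t * a ^ n ∈ q := by
  have hprime : p.IsPrime := hp.1.1
  by_contra hcon
  push_neg at hcon
  have hone : (1 : R) ∉ p := fun h => hprime.ne_top ((Ideal.eq_top_iff_one p).mpr h)
  let T : Submonoid R :=
    { carrier := {r | ∃ t, t ∉ p ∧ ∃ n : ℕ, r = t * a ^ n}
      one_mem' := ⟨1, hone, 0, by ring⟩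
      mul_mem' := by
        rintro x y ⟨t₁, ht₁, n₁, rfl⟩ ⟨t₂, ht₂, n₂, rfl⟩
        exact ⟨t₁ * t₂, fun hm => ((hprime.mem_or_mem hm).elim ht₁ ht₂), n₁ + n₂, by ring⟩ }
  have hdisj : Disjoint (q : Set R) (T : Set R) := by
    rw [Set.disjoint_left]
    rintro r hrq ⟨t, ht, n, rfl⟩
    exact hcon n t ht hrq
  obtain ⟨p', hp'prime, hqp', hdisj'⟩ := Ideal.exists_le_prime_disjoint q T hdisj
  have hp'p : p' ≤ p := by
    intro x hx
    by_contra hxp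
    exact Set.disjoint_left.mp hdisj' hx ⟨x, hxp, 0, by ring⟩
  have hpp' : p ≤ p' := hp.2 ⟨hp'prime, hqp'⟩ hp'p
  exact Set.disjoint_left.mp hdisj' (hpp' ha) ⟨1, hone, 1, by ring⟩

/-- Key step: for `p` minimal prime over `(N : m₀)`, we get `(N + pM : m₀) ≤ p`. -/
lemma key_colon {N : Submodule R M} (hN : IsSemiprimeSub N) {m₀ : M} {p : Ideal R}
    (hp : p ∈ (pointColon N m₀).minimalPrimes) :
    pointColon (N ⊔ p • (⊤ : Submodule R M)) m₀ ≤ p := by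
  classical
  intro s hs
  by_contra hsp
  have hprime : p.IsPrime := hp.1.1
  haveI := hprime
  have hone : (1 : R) ∉ p := fun h => hprime.ne_top ((Ideal.eq_top_iff_one p).mpr h)
  obtain ⟨y, hy, v, hv, heq⟩ := Submodule.mem_sup.mp (mem_pointColon.mp hs)
  obtain ⟨I, hIfg, hIp, hvI⟩ := exists_fg_smul_top hv
  set q := pointColon N m₀ with hqdef
  let Γ : Ideal R :=
    { carrier := {r | ∃ t, t ∉ p ∧ t * r ∈ q}
      zero_mem' := ⟨1, hone, by simpa using Submodule.zero_mem q⟩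
      add_mem' := by
        rintro x y ⟨t₁, ht₁, h₁⟩ ⟨t₂, ht₂, h₂⟩
        refine ⟨t₁ * t₂, fun hm => (hprime.mem_or_mem hm).elim ht₁ ht₂, ?_⟩
        have h3 : t₁ * t₂ * (x + y) = t₂ * (t₁ * x) + t₁ * (t₂ * y) := by ring
        rw [h3]
        exact Ideal.add_mem _ (Ideal.mul_mem_left _ _ h₁) (Ideal.mul_mem_left _ _ h₂)
      smul_mem' := by
        rintro c x ⟨t, ht, hx⟩
        refine ⟨t, ht, ?_⟩
        have h3 : t * (c • x) = c * (t * x) := by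
          simp only [smul_eq_mul]; ring
        rw [h3]
        exact Ideal.mul_mem_left _ _ hx }
  have hIrad : I ≤ Γ.radical := by
    intro a haI
    obtain ⟨n, t, ht, htq⟩ := exists_mul_pow_mem_of_mem_minimalPrimes hp (hIp haI)
    exact ⟨n, t, ht, htq⟩
  obtain ⟨n, hpow⟩ := Ideal.exists_pow_le_of_le_radical_of_fg hIrad hIfg
  obtain ⟨S, hS⟩ := Submodule.FG.pow hIfg n
  have hcS : ∀ c ∈ S, ∃ t, t ∉ p ∧ t * c ∈ q := by
    intro c hc
    exact hpow (hS ▸ Submodule.subset_span hc)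
  choose tf htf1 htf2 using hcS
  set t : R := ∏ c ∈ S.attach, tf c.1 c.2 with htdef
  have htp : t ∉ p := by
    intro hmem
    obtain ⟨c, _, hc⟩ := Ideal.IsPrime.prod_mem_iff.mp hmem
    exact htf1 c.1 c.2 hc
  have htc : ∀ c ∈ I ^ n, t * c ∈ q := by
    have hle : (I ^ n : Ideal R) ≤ q.colon (Submodule.span R {t}) := by
      rw [← hS]
      refine Submodule.span_le.mpr (fun c hc => ?_)
      rw [SetLike.mem_coe, Submodule.mem_colon_span_singleton, smul_eq_mul]
      have h4 : c * t = (∏ d ∈ S.attach.erase ⟨c, hc⟩, tf d.1 d.2) * (tf c hc * c) := by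
        rw [htdef, ← Finset.mul_prod_erase S.attach _ (Finset.mem_attach S ⟨c, hc⟩)]
        ring
      rw [h4]
      exact Ideal.mul_mem_left _ _ (htf2 c hc)
    intro c hc
    have h5 := hle hc
    rw [Submodule.mem_colon_span_singleton, smul_eq_mul] at h5
    rwa [mul_comm] at h5
  have hzmem : (t * s) • m₀ ∈ N ⊔ I • (⊤ : Submodule R M) := by
    have h1 : s • m₀ ∈ N ⊔ I • (⊤ : Submodule R M) :=
      Submodule.mem_sup.mpr ⟨y, hy, v, hvI, heq⟩
    rw [mul_smul]
    exact Submodule.smul_mem _ t h1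
  have hzN : (t * s) • m₀ ∈ N := by
    refine semiprime_pow_smul hN I n _ hzmem (fun c hc => ?_)
    have h1 : (t * c) • m₀ ∈ N := mem_pointColon.mp (htc c hc)
    have h2 : s • ((t * c) • m₀) ∈ N := Submodule.smul_mem _ s h1
    have h3 : c • (t * s) • m₀ = s • (t * c) • m₀ := by
      rw [smul_smul, smul_smul]
      congr 1
      ring
    rw [h3]
    exact h2
  have hq1 : t * s ∈ q := mem_pointColon.mpr hzN
  have hq2 : t * s ∈ p := hp.1.2 hq1
  exact (hprime.mem_or_mem hq2).elim htp hsp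

/-- Existence of a prime submodule over a semiprime `N` avoiding `m₀ ∉ N`. -/
lemma exists_prime_above {N : Submodule R M} (hNsp : IsSemiprimeSub N) {m₀ : M}
    (hm₀ : m₀ ∉ N) : ∃ K : Submodule R M, IsPrimeSub K ∧ N ≤ K ∧ m₀ ∉ K := by
  set q := pointColon N m₀ with hq
  have hqtop : q ≠ ⊤ := by
    intro h
    apply hm₀
    have h1 : (1 : R) ∈ q := h ▸ Submodule.mem_top
    simpa using (mem_pointColon.mp h1)
  obtain ⟨mx, hmx, hqmx⟩ := Ideal.exists_le_maximal q hqtop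
  haveI := hmx.isPrime
  obtain ⟨p, hp, _⟩ := Ideal.exists_minimalPrimes_le hqmx
  have hprime : p.IsPrime := hp.1.1
  have hone : (1 : R) ∉ p := fun h => hprime.ne_top ((Ideal.eq_top_iff_one p).mpr h)
  set Sset : Set (Submodule R M) :=
    {K | N ⊔ p • (⊤ : Submodule R M) ≤ K ∧ pointColon K m₀ ≤ p} with hSset
  have hbase : (N ⊔ p • (⊤ : Submodule R M)) ∈ Sset := ⟨le_rfl, key_colon hNsp hp⟩
  have hchainub : ∀ c ⊆ Sset, IsChain (· ≤ ·) c → ∀ y ∈ c, ∃ ub ∈ Sset, ∀ z ∈ c, z ≤ ub := by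
    intro c hcS hchain y hy
    refine ⟨sSup c, ⟨le_trans (hcS hy).1 (le_sSup hy), ?_⟩, fun z hz => le_sSup hz⟩
    intro r hr
    obtain ⟨K', hK'c, hK'⟩ :=
      (Submodule.mem_sSup_of_directed ⟨y, hy⟩ hchain.directedOn).mp (mem_pointColon.mp hr)
    exact (hcS hK'c).2 (mem_pointColon.mpr hK')
  obtain ⟨K, hKb, hK⟩ := zorn_le_nonempty₀ Sset hchainub _ hbase
  have hKS : K ∈ Sset := hK.1
  have hm₀K : m₀ ∉ K := by
    intro h
    exact hone (hKS.2 (mem_pointColon.mpr (by simpa using h)))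
  refine ⟨K, ⟨?_, ?_⟩, le_trans le_sup_left hKS.1, hm₀K⟩
  · intro h
    exact hm₀K (h ▸ Submodule.mem_top)
  · intro r m hrm
    by_cases hmK : m ∈ K
    · exact Or.inl hmK
    right
    have hnot : ¬ pointColon (K ⊔ Submodule.span R {m}) m₀ ≤ p := by
      intro hle
      have hmem : (K ⊔ Submodule.span R {m}) ∈ Sset := ⟨le_trans hKS.1 le_sup_left, hle⟩
      have h6 := hK.2 hmem le_sup_left
      exact hmK (h6 (Submodule.mem_sup_right (Submodule.mem_span_singleton_self m)))
    obtain ⟨s, hs, hsp⟩ := SetLike.not_le_iff_exists.mp hnot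
    obtain ⟨k, hk, w, hw, heq⟩ := Submodule.mem_sup.mp (mem_pointColon.mp hs)
    obtain ⟨cc, rfl⟩ := Submodule.mem_span_singleton.mp hw
    have hrs : (r * s) • m₀ ∈ K := by
      have h7 : (r * s) • m₀ = r • k + cc • (r • m) := by
        rw [mul_smul, ← heq, smul_add, smul_comm r cc m]
      rw [h7]
      exact Submodule.add_mem _ (Submodule.smul_mem _ r hk) (Submodule.smul_mem _ cc hrm)
    have hrsp : r * s ∈ p := hKS.2 (mem_pointColon.mpr hrs)
    have hrp : r ∈ p := (hprime.mem_or_mem hrsp).resolve_right hsp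
    intro x
    have h8 : r • x ∈ p • (⊤ : Submodule R M) := Submodule.smul_mem_smul hrp Submodule.mem_top
    exact hKS.1 (Submodule.mem_sup_right h8)

end Aux

theorem semiprime_iff_radical {R M : Type*} [CommRing R] [AddCommGroup M] [Module R M]
    [Module.Finite R M] (N : Submodule R M) (hN : N ≠ ⊤) :
    IsSemiprimeSub N ↔ N = sInf {P : Submodule R M | IsPrimeSub P ∧ N ≤ P} := by
  constructor
  · intro hNsp
    apply le_antisymm
    · exact le_sInf (fun P hP => hP.2)
    · intro m hm
      by_contra hmN
      obtain ⟨K, hKprime, hNK, hmK⟩ := exists_prime_above hNsp hmN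
      exact hmK (Submodule.mem_sInf.mp hm K ⟨hKprime, hNK⟩)
  · intro h m hm
    rw [h] at hm ⊢
    apply Submodule.mem_sInf.mpr
    intro P hP
    apply isPrimeSub_semiprime hP.1
    refine Submodule.smul_mono_left ?_ hm
    intro r hr
    exact mem_pointColon.mpr (Submodule.mem_sInf.mp (mem_pointColon.mp hr) P hP)
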